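/- Let H be a Hadamard k-tensor of side length N, i.e., a sign k-tensor such that (H ∙₁ H)(x₂,x₂',...,x_k,x_k') = 0 whenever x_i ≠ x_i' for all i = 2,...,k. Then μ^∞(H) ≥ (N/(k−1))^{1/2^{k−1}}. -/

import Mathlib

/-!
A cylinder intersection `Z ⊆ [N]^(m+1)` factors as `χ_Z(x, y) = g(y) ∏ᵢ fᵢ(x, y)` with `g`
independent of `x` and `fᵢ` independent of `yᵢ`. Cauchy–Schwarz in one coordinate of `y` removes
`f₀` and doubles the tensor in that coordinate; after `m` such steps
`|𝔼 H χ_Z| ^ 2^m ≤ 𝔼 |H ∙₁ H|`. For a Hadamard tensor `H ∙₁ H` vanishes unless `y` and `y'` agree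
in some coordinate, which happens with probability at most `m / N`. Hence
`μ*(H) ≤ N^(m+1) (m/N)^(1/2^m)`, and `μ^∞(H) ≥ ⟨H, H⟩ / μ*(H)` gives the bound.
-/

open scoped BigOperators

variable {ι : Type*} [Fintype ι] [DecidableEq ι] {X : ι → Type*} [∀ i, Fintype (X i)]

/-- A cylinder in dimension `i`: membership does not depend on the `i`-th coordinate. -/
def IsCylinder (i : ι) (Z : Set (∀ j, X j)) : Prop :=
  ∀ z z' : ∀ j, X j, (∀ j, j ≠ i → z j = z' j) → z ∈ Z → z' ∈ Z

/-- A cylinder intersection: an intersection of cylinders, one in each dimension. -/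
def IsCylinderIntersection (Z : Set (∀ j, X j)) : Prop :=
  ∃ C : ι → Set (∀ j, X j), (∀ i, IsCylinder i (C i)) ∧ Z = ⋂ i, C i

/-- The dual cylinder intersection norm `μ*(Q) = max_Z |⟨Q, χ(Z)⟩|`. -/
noncomputable def mustar (Q : (∀ j, X j) → ℝ) : ℝ :=
  sSup {r : ℝ | ∃ Z : Set (∀ j, X j), IsCylinderIntersection Z ∧
    r = |∑ x, Q x * Z.indicator 1 x|}

/-- The cylinder intersection norm `μ(B) = min { Σ|α_i| : B = Σ α_i χ(Z_i) }`. -/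
noncomputable def mu (B : (∀ j, X j) → ℝ) : ℝ :=
  sInf {s : ℝ | ∃ (n : ℕ) (α : Fin n → ℝ) (Z : Fin n → Set (∀ j, X j)),
    (∀ t, IsCylinderIntersection (Z t)) ∧
    (∀ x, B x = ∑ t, α t * (Z t).indicator 1 x) ∧ s = ∑ t, |α t|}

/-- The approximate cylinder intersection norm `μ^∞(A) = min { μ(B) : 1 ≤ A∘B }`. -/
noncomputable def muInf (A : (∀ j, X j) → ℝ) : ℝ :=
  sInf {s : ℝ | ∃ B : (∀ j, X j) → ℝ, (∀ x, 1 ≤ A x * B x) ∧ s = mu B}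


open Finset

omit [Fintype ι] [DecidableEq ι] [∀ i, Fintype (X i)] in
theorem IsCylinder.indicator_eq {i : ι} {C : Set (∀ j, X j)} (hC : IsCylinder i C)
    {z z' : ∀ j, X j} (h : ∀ j, j ≠ i → z j = z' j) :
    C.indicator (1 : (∀ j, X j) → ℝ) z = C.indicator 1 z' := by
  have hC' : z ∈ C ↔ z' ∈ C :=
    ⟨hC z z' h, hC z' z fun j hj => (h j hj).symm⟩
  classical
  simp only [Set.indicator_apply, hC', Pi.one_apply]

omit [DecidableEq ι] [∀ i, Fintype (X i)] in
theorem indicator_iInter_apply_eq_prod (C : ι → Set (∀ j, X j)) (z : ∀ j, X j) :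
    (⋂ i, C i).indicator (1 : (∀ j, X j) → ℝ) z = ∏ i, (C i).indicator 1 z := by
  simpa using (prod_indicator_apply univ C (fun _ => (1 : (∀ j, X j) → ℝ)) z).symm

omit [Fintype ι] [DecidableEq ι] [∀ i, Fintype (X i)] in
theorem isCylinderIntersection_univ : IsCylinderIntersection (Set.univ : Set (∀ j, X j)) :=
  ⟨fun _ => Set.univ, fun _ _ _ _ _ => trivial, Set.iInter_univ.symm⟩

omit [Fintype ι] [DecidableEq ι] [∀ i, Fintype (X i)] in
theorem isCylinderIntersection_singleton [Nontrivial ι] (z : ∀ j, X j) :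
    IsCylinderIntersection {z} := by
  refine ⟨fun i => {w | ∀ j, j ≠ i → w j = z j}, fun i w w' h hw j hj => (h j hj) ▸ hw j hj, ?_⟩
  ext w
  simp only [Set.mem_singleton_iff, Set.mem_iInter, Set.mem_ofPred_eq]
  refine ⟨fun hw i j _ => hw ▸ rfl, fun hw => funext fun j => ?_⟩
  obtain ⟨i, hij⟩ := exists_ne j
  exact hw i j hij.symm

theorem abs_sum_mul_indicator_le_mustar (Q : (∀ j, X j) → ℝ) {Z : Set (∀ j, X j)}
    (hZ : IsCylinderIntersection Z) : |∑ x, Q x * Z.indicator 1 x| ≤ mustar Q := by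
  classical
  refine le_csSup ⟨∑ x, |Q x|, ?_⟩ ⟨Z, hZ, rfl⟩
  rintro r ⟨Z', -, rfl⟩
  refine (abs_sum_le_sum_abs _ _).trans (sum_le_sum fun x _ => ?_)
  rw [abs_mul]
  refine mul_le_of_le_one_right (abs_nonneg _) ?_
  rw [Set.indicator_apply]
  split_ifs <;> simp

theorem mustar_le {Q : (∀ j, X j) → ℝ} {b : ℝ}
    (h : ∀ Z, IsCylinderIntersection Z → |∑ x, Q x * Z.indicator 1 x| ≤ b) : mustar Q ≤ b :=
  csSup_le ⟨_, Set.univ, isCylinderIntersection_univ, rfl⟩ fun _ ⟨Z, hZ, hr⟩ => hr ▸ h Z hZ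

theorem abs_le_mustar [Nontrivial ι] (Q : (∀ j, X j) → ℝ) (z : ∀ j, X j) : |Q z| ≤ mustar Q := by
  classical
  simpa [Set.indicator_apply, mul_ite] using
    abs_sum_mul_indicator_le_mustar Q (isCylinderIntersection_singleton z)

theorem mustar_nonneg (Q : (∀ j, X j) → ℝ) : 0 ≤ mustar Q :=
  (abs_nonneg _).trans (abs_sum_mul_indicator_le_mustar Q isCylinderIntersection_univ)

theorem exists_eq_sum_mul_indicator [Nontrivial ι] (B : (∀ j, X j) → ℝ) :
    ∃ (n : ℕ) (α : Fin n → ℝ) (Z : Fin n → Set (∀ j, X j)),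
      (∀ t, IsCylinderIntersection (Z t)) ∧ ∀ x, B x = ∑ t, α t * (Z t).indicator 1 x := by
  let e := (Fintype.equivFin (∀ j, X j)).symm
  refine ⟨_, fun t => B (e t), fun t => {e t}, fun t => isCylinderIntersection_singleton _,
    fun x => ?_⟩
  classical
  rw [e.sum_comp (fun z => B z * Set.indicator {z} 1 x)]
  simp [Set.indicator_apply, mul_ite]

/-- The duality `⟨A, B⟩ ≤ μ(B) μ*(A)`, applied to `⟨A, B⟩ ≥ |X|`. -/
theorem card_div_mustar_le_mu [Nontrivial ι] {A B : (∀ j, X j) → ℝ}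
    (hAB : ∀ x, 1 ≤ A x * B x) : (Fintype.card (∀ j, X j) : ℝ) / mustar A ≤ mu B := by
  obtain ⟨n, α, Z, hZ, hB⟩ := exists_eq_sum_mul_indicator B
  refine le_csInf ⟨_, n, α, Z, hZ, hB, rfl⟩ ?_
  rintro _ ⟨n, α, Z, hZ, hB, rfl⟩
  refine div_le_of_le_mul₀ (mustar_nonneg A) (sum_nonneg fun t _ => abs_nonneg _) ?_
  calc (Fintype.card (∀ j, X j) : ℝ) = ∑ _x : ∀ j, X j, (1 : ℝ) := by simp
    _ ≤ ∑ x, A x * B x := sum_le_sum fun x _ => hAB x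
    _ = ∑ t, α t * ∑ x, A x * (Z t).indicator 1 x := by
        simp_rw [hB, mul_sum]
        rw [sum_comm]
        exact sum_congr rfl fun t _ => sum_congr rfl fun x _ => by ring
    _ ≤ ∑ t, |α t| * mustar A := sum_le_sum fun t _ => by
        refine (le_abs_self _).trans ?_
        rw [abs_mul]
        exact mul_le_mul_of_nonneg_left (abs_sum_mul_indicator_le_mustar A (hZ t)) (abs_nonneg _)
    _ = (∑ t, |α t|) * mustar A := (sum_mul _ _ _).symm

theorem card_div_mustar_le_muInf [Nontrivial ι] {A : (∀ j, X j) → ℝ} (hA : ∀ x, A x ≠ 0) :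
    (Fintype.card (∀ j, X j) : ℝ) / mustar A ≤ muInf A :=
  le_csInf ⟨_, fun x => (A x)⁻¹, fun x => (mul_inv_cancel₀ (hA x)).ge, rfl⟩
    fun _ ⟨_, hAB, hs⟩ => hs ▸ card_div_mustar_le_mu hAB

section Expectation

variable {κ : Type*} [Fintype κ] [Nonempty κ]

theorem sq_expect_mul_le_expect_sq {a b : κ → ℝ} (ha : ∀ p, |a p| ≤ 1) :
    (𝔼 p, a p * b p) ^ 2 ≤ 𝔼 p, b p ^ 2 := by
  have ha2 : 𝔼 p, a p ^ 2 ≤ 1 :=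
    expect_le univ_nonempty fun p _ => by
      rw [← sq_abs]; exact pow_le_one₀ (abs_nonneg _) (ha p)
  calc (𝔼 p, a p * b p) ^ 2 ≤ (𝔼 p, a p ^ 2) * 𝔼 p, b p ^ 2 := expect_mul_sq_le_sq_mul_sq univ a b
    _ ≤ 𝔼 p, b p ^ 2 := mul_le_of_le_one_left (expect_nonneg fun p _ => sq_nonneg _) ha2

theorem pow_expect_le_expect_pow {a : κ → ℝ} (ha : ∀ p, 0 ≤ a p) (n : ℕ) :
    (𝔼 p, a p) ^ n ≤ 𝔼 p, a p ^ n := by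
  rcases n with _ | n
  · simp
  simp only [expect_eq_sum_div_card, div_pow]
  calc (∑ p, a p) ^ (n + 1) / (#univ : ℝ) ^ (n + 1)
      = (∑ p, a p) ^ (n + 1) / (#univ : ℝ) ^ n / #univ := by
        rw [div_div, ← pow_succ]
    _ ≤ (∑ p, a p ^ (n + 1)) / #univ := by
      gcongr
      exact pow_sum_div_card_le_sum_pow (fun p _ => ha p) n

end Expectation

theorem expect_fin_cons {M β : Type*} [AddCommMonoid M] [Module ℚ≥0 M] [Fintype β] {n : ℕ}
    (h : (Fin (n + 1) → β) → M) : 𝔼 y, h y = 𝔼 t, 𝔼 z, h (Fin.cons t z) := by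
  rw [← expect_product', univ_product_univ]
  exact Fintype.expect_equiv (Fin.consEquiv fun _ => β).symm _ _ fun y => by simp

theorem expect_comp_apply {M ι β : Type*} [AddCommMonoid M] [Module ℚ≥0 M] [Fintype ι]
    [DecidableEq ι] [Fintype β] [Nonempty β] (i : ι) (φ : β → M) :
    𝔼 y : ι → β, φ (y i) = 𝔼 b, φ b := by
  rw [Fintype.expect_equiv (Equiv.funSplitAt i β) (fun y => φ (y i)) (fun p => φ p.1)
    fun y => rfl, ← univ_product_univ, expect_product]
  simp

/-- For `F x y = H (x, y)`, `contractionProduct F y y'` is the entry `(H ∙₁ H)(y, y')`: the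
product runs over the `2 ^ m` corners of the box spanned by `y` and `y'`. -/
noncomputable def contractionProduct {α β : Type*} [Fintype α] {m : ℕ}
    (F : α → (Fin m → β) → ℝ) (y y' : Fin m → β) : ℝ :=
  𝔼 x, ∏ ε : Fin m → Bool, F x fun i => if ε i then y' i else y i

theorem abs_contractionProduct_le_one {α β : Type*} [Fintype α] [Nonempty α] {m : ℕ}
    {F : α → (Fin m → β) → ℝ} (hF : ∀ x y, |F x y| ≤ 1) (y y' : Fin m → β) :
    |contractionProduct F y y'| ≤ 1 :=
  (abs_expect_le _ _).trans <| expect_le univ_nonempty fun x _ => by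
    rw [abs_prod]
    exact prod_le_one (fun ε _ => abs_nonneg _) fun ε _ => hF x _

theorem contractionProduct_cons {α β : Type*} [Fintype α] {m : ℕ}
    (F : α → (Fin (m + 1) → β) → ℝ) (t t' : β) (z z' : Fin m → β) :
    contractionProduct F (Fin.cons t z) (Fin.cons t' z') =
      contractionProduct (fun x w => F x (Fin.cons t w) * F x (Fin.cons t' w)) z z' := by
  have hcorner : ∀ (b : Bool) (ε : Fin m → Bool),
      (fun i => if (Fin.cons b ε : Fin (m + 1) → Bool) i then (Fin.cons t' z' : Fin (m + 1) → β) i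
        else (Fin.cons t z : Fin (m + 1) → β) i) =
        Fin.cons (if b then t' else t) fun i => if ε i then z' i else z i := fun b ε => by
    funext i
    refine Fin.cases ?_ (fun j => ?_) i <;> simp
  refine expect_congr rfl fun x _ => ?_
  rw [← (Fin.consEquiv fun _ => Bool).prod_comp, Fintype.prod_prod_type, Fintype.prod_bool,
    ← prod_mul_distrib]
  refine prod_congr rfl fun ε _ => ?_
  simp only [Fin.consEquiv_apply, hcorner, if_true]
  exact mul_comm _ _

section CauchySchwarz

variable {α β : Type*} [Fintype α] [Nonempty α] [Fintype β] [Nonempty β]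

theorem sq_expect_mul_prod_le_expect_pair {m : ℕ} (F : α → (Fin (m + 1) → β) → ℝ)
    (f : Fin (m + 1) → α → (Fin (m + 1) → β) → ℝ) (g : (Fin (m + 1) → β) → ℝ)
    (hf : ∀ i x y, |f i x y| ≤ 1)
    (hf_update : ∀ i x y b, f i x (Function.update y i b) = f i x y) :
    (𝔼 x, 𝔼 y, g y * (∏ i, f i x y) * F x y) ^ 2 ≤
      𝔼 t, 𝔼 t', 𝔼 x, 𝔼 z, (g (Fin.cons t z) * g (Fin.cons t' z)) *
        (∏ i : Fin m, f i.succ x (Fin.cons t z) * f i.succ x (Fin.cons t' z)) *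
        (F x (Fin.cons t z) * F x (Fin.cons t' z)) := by
  obtain ⟨t₀⟩ := ‹Nonempty β›
  have hf_zero : ∀ x t z, f 0 x (Fin.cons t z) = f 0 x (Fin.cons t₀ z) := fun x t z => by
    rw [← hf_update 0 x (Fin.cons t₀ z) t, Fin.update_cons_zero]
  set b : α → β → (Fin m → β) → ℝ := fun x t z =>
    g (Fin.cons t z) * (∏ i : Fin m, f i.succ x (Fin.cons t z)) * F x (Fin.cons t z)
  have hsplit : 𝔼 x, 𝔼 y, g y * (∏ i, f i x y) * F x y =
      𝔼 x, 𝔼 z, f 0 x (Fin.cons t₀ z) * 𝔼 t, b x t z := by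
    refine expect_congr rfl fun x _ => ?_
    rw [expect_fin_cons, expect_comm]
    refine expect_congr rfl fun z _ => ?_
    rw [mul_expect]
    refine expect_congr rfl fun t _ => ?_
    rw [Fin.prod_univ_succ, hf_zero]
    ring
  calc (𝔼 x, 𝔼 y, g y * (∏ i, f i x y) * F x y) ^ 2
      ≤ 𝔼 x, (𝔼 z, f 0 x (Fin.cons t₀ z) * 𝔼 t, b x t z) ^ 2 := by
        rw [hsplit]
        simpa using sq_expect_mul_le_expect_sq (a := fun _ => (1 : ℝ)) (by simp)
    _ ≤ 𝔼 x, 𝔼 z, (𝔼 t, b x t z) ^ 2 :=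
        expect_le_expect fun x _ => sq_expect_mul_le_expect_sq fun z => hf 0 x _
    _ = 𝔼 x, 𝔼 t, 𝔼 t', 𝔼 z, b x t z * b x t' z := by
        simp_rw [sq, expect_mul_expect]
        refine expect_congr rfl fun x _ => ?_
        rw [expect_comm]
        exact expect_congr rfl fun t _ => expect_comm _ _ _
    _ = _ := by
        rw [expect_comm]
        refine expect_congr rfl fun t _ => ?_
        rw [expect_comm]
        refine expect_congr rfl fun t' _ =>
          expect_congr rfl fun x _ => expect_congr rfl fun z _ => ?_
        simp only [b, prod_mul_distrib]
        ring

/-- Induction on `m`: `sq_expect_mul_prod_le_expect_pair` turns the first coordinate of `y` into a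
pair `(t, t')`, the induction hypothesis applies for each fixed pair, and Jensen's inequality
averages over the pairs. -/
theorem abs_expect_mul_prod_pow_le : ∀ {m : ℕ} (F : α → (Fin m → β) → ℝ)
    (f : Fin m → α → (Fin m → β) → ℝ) (g : (Fin m → β) → ℝ), (∀ y, |g y| ≤ 1) →
    (∀ i x y, |f i x y| ≤ 1) → (∀ i x y b, f i x (Function.update y i b) = f i x y) →
    |𝔼 x, 𝔼 y, g y * (∏ i, f i x y) * F x y| ^ 2 ^ m ≤
      𝔼 y, 𝔼 y', |contractionProduct F y y'|
  | 0, F, f, g, hg, _, _ => by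
    simp only [Fin.prod_univ_zero, mul_one]
    simp only [Unique.eq_default, Fintype.expect_const, contractionProduct, Fintype.prod_unique,
      pow_zero, pow_one, ← mul_expect, abs_mul]
    exact mul_le_of_le_one_left (abs_nonneg _) (hg _)
  | m + 1, F, f, g, hg, hf, hf_update => by
    set S := 𝔼 x, 𝔼 y, g y * (∏ i, f i x y) * F x y
    set P : β → β → ℝ := fun t t' => 𝔼 x, 𝔼 z, (g (Fin.cons t z) * g (Fin.cons t' z)) *
      (∏ i : Fin m, f i.succ x (Fin.cons t z) * f i.succ x (Fin.cons t' z)) *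
      (F x (Fin.cons t z) * F x (Fin.cons t' z))
    have hP : ∀ t t', |P t t'| ^ 2 ^ m ≤
        𝔼 z, 𝔼 z', |contractionProduct F (Fin.cons t z) (Fin.cons t' z')| := fun t t' => by
      simp_rw [contractionProduct_cons]
      refine abs_expect_mul_prod_pow_le _ _ _ (fun z => ?_) (fun i x z => ?_)
        (fun i x z b => by simp only [Fin.cons_update, hf_update])
      · rw [abs_mul]; exact mul_le_one₀ (hg _) (abs_nonneg _) (hg _)
      · rw [abs_mul]; exact mul_le_one₀ (hf _ _ _) (abs_nonneg _) (hf _ _ _)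
    have hS : S ^ 2 ≤ 𝔼 t, 𝔼 t', |P t t'| :=
      (sq_expect_mul_prod_le_expect_pair F f g hf hf_update).trans
        (expect_le_expect fun t _ => expect_le_expect fun t' _ => le_abs_self _)
    calc |S| ^ 2 ^ (m + 1) = (S ^ 2) ^ 2 ^ m := by rw [pow_succ, pow_mul', sq_abs]
      _ ≤ (𝔼 t, 𝔼 t', |P t t'|) ^ 2 ^ m := pow_le_pow_left₀ (sq_nonneg _) hS _
      _ ≤ 𝔼 t, (𝔼 t', |P t t'|) ^ 2 ^ m :=
          pow_expect_le_expect_pow (fun t => expect_nonneg fun _ _ => abs_nonneg _) _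
      _ ≤ 𝔼 t, 𝔼 t', |P t t'| ^ 2 ^ m :=
          expect_le_expect fun t _ => pow_expect_le_expect_pow (fun _ => abs_nonneg _) _
      _ ≤ 𝔼 t, 𝔼 t', 𝔼 z, 𝔼 z', |contractionProduct F (Fin.cons t z) (Fin.cons t' z')| :=
          expect_le_expect fun t _ => expect_le_expect fun t' _ => hP t t'
      _ = 𝔼 y, 𝔼 y', |contractionProduct F y y'| := by
          rw [expect_fin_cons fun y => 𝔼 y', |contractionProduct F y y'|]
          refine expect_congr rfl fun t _ => ?_
          rw [expect_comm]
          exact expect_congr rfl fun z _ =>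
            (expect_fin_cons fun y' => |contractionProduct F (Fin.cons t z) y'|).symm

end CauchySchwarz

theorem expect_expect_ite_apply_eq {ι β : Type*} [Fintype ι] [DecidableEq ι] [Fintype β]
    [Nonempty β] [DecidableEq β] (i : ι) :
    𝔼 y : ι → β, 𝔼 y' : ι → β, (if y i = y' i then 1 else 0 : ℝ) = 1 / Fintype.card β := by
  refine (expect_congr rfl fun y _ =>
    expect_comp_apply i fun b => (if y i = b then 1 else 0 : ℝ)).trans ?_
  simp [expect_eq_sum_div_card]

theorem expect_abs_contractionProduct_le {α β : Type*} [Fintype α] [Nonempty α] [Fintype β]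
    [Nonempty β] [DecidableEq β] {m : ℕ} {F : α → (Fin m → β) → ℝ} (hF : ∀ x y, |F x y| ≤ 1)
    (hF_zero : ∀ y y', (∀ i, y i ≠ y' i) → contractionProduct F y y' = 0) :
    𝔼 y, 𝔼 y', |contractionProduct F y y'| ≤ m / Fintype.card β := by
  have hpair : ∀ y y', |contractionProduct F y y'| ≤ ∑ i, if y i = y' i then 1 else 0 := by
    intro y y'
    by_cases h : ∀ i, y i ≠ y' i
    · rw [hF_zero y y' h, abs_zero]
      exact sum_nonneg fun i _ => by positivity
    · push Not at h
      obtain ⟨i, hi⟩ := h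
      refine (abs_contractionProduct_le_one hF y y').trans ?_
      exact le_trans (by simp [hi]) (single_le_sum (fun j _ => by positivity) (mem_univ i))
  calc 𝔼 y, 𝔼 y', |contractionProduct F y y'|
      ≤ 𝔼 y, 𝔼 y', ∑ i, (if y i = y' i then 1 else 0 : ℝ) :=
        expect_le_expect fun y _ => expect_le_expect fun y' _ => hpair y y'
    _ = m / Fintype.card β := by
        simp_rw [expect_sum_comm, expect_expect_ite_apply_eq]
        simp [div_eq_mul_inv]

section CylinderIntersection

variable {β : Type*} [Fintype β] [Nonempty β] {m : ℕ}

omit [Fintype β] in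
theorem IsCylinderIntersection.exists_indicator_fin_cons_eq {Z : Set (Fin (m + 1) → β)}
    (hZ : IsCylinderIntersection Z) :
    ∃ (g : (Fin m → β) → ℝ) (f : Fin m → β → (Fin m → β) → ℝ), (∀ y, |g y| ≤ 1) ∧
      (∀ i x y, |f i x y| ≤ 1) ∧ (∀ i x y b, f i x (Function.update y i b) = f i x y) ∧
      ∀ x y, Z.indicator 1 (Fin.cons x y) = g y * ∏ i, f i x y := by
  obtain ⟨C, hC, rfl⟩ := hZ
  obtain ⟨x₀⟩ := ‹Nonempty β›
  have hind : ∀ i z, |(C i).indicator (1 : (Fin (m + 1) → β) → ℝ) z| ≤ 1 := fun i z => by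
    classical
    rw [Set.indicator_apply]; split_ifs <;> simp
  refine ⟨fun y => (C 0).indicator 1 (Fin.cons x₀ y),
    fun i x y => (C i.succ).indicator 1 (Fin.cons x y), fun y => hind _ _, fun i x y => hind _ _,
    fun i x y b => ?_, fun x y => ?_⟩
  · dsimp only
    rw [Fin.cons_update]
    exact (hC i.succ).indicator_eq fun j hj => Function.update_of_ne hj _ _
  · rw [indicator_iInter_apply_eq_prod, Fin.prod_univ_succ]
    congr 1
    refine (hC 0).indicator_eq fun j hj => ?_
    obtain ⟨j, rfl⟩ := Fin.exists_succ_eq.mpr hj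
    simp

theorem abs_expect_mul_indicator_pow_le (H : (Fin (m + 1) → β) → ℝ)
    {Z : Set (Fin (m + 1) → β)} (hZ : IsCylinderIntersection Z) :
    |𝔼 x, H x * Z.indicator 1 x| ^ 2 ^ m ≤
      𝔼 y, 𝔼 y', |contractionProduct (fun x y => H (Fin.cons x y)) y y'| := by
  obtain ⟨g, f, hg, hf, hf_update, hZ_eq⟩ := hZ.exists_indicator_fin_cons_eq
  convert abs_expect_mul_prod_pow_le (fun x y => H (Fin.cons x y)) f g hg hf hf_update using 3
  rw [expect_fin_cons]
  refine expect_congr rfl fun x _ => expect_congr rfl fun y _ => ?_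
  rw [hZ_eq]
  ring

theorem mustar_le_card_mul_rpow (H : (Fin (m + 1) → β) → ℝ) :
    mustar H ≤ Fintype.card β ^ (m + 1) *
      (𝔼 y, 𝔼 y', |contractionProduct (fun x y => H (Fin.cons x y)) y y'|) ^ ((1 : ℝ) / 2 ^ m) := by
  refine mustar_le fun Z hZ => ?_
  have hcard : (Fintype.card (Fin (m + 1) → β) : ℝ) = Fintype.card β ^ (m + 1) := by simp
  rw [← Fintype.card_mul_expect, abs_mul, hcard, abs_of_nonneg (by positivity)]
  refine mul_le_mul_of_nonneg_left ?_ (by positivity)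
  have h2m : (2 ^ m : ℕ) ≠ 0 := by positivity
  calc |𝔼 x, H x * Z.indicator 1 x|
      = (|𝔼 x, H x * Z.indicator 1 x| ^ 2 ^ m) ^ ((2 ^ m : ℕ)⁻¹ : ℝ) :=
        (Real.pow_rpow_inv_natCast (abs_nonneg _) h2m).symm
    _ ≤ _ := by
        rw [show (1 : ℝ) / 2 ^ m = ((2 ^ m : ℕ) : ℝ)⁻¹ by push_cast; ring]
        exact Real.rpow_le_rpow (by positivity) (abs_expect_mul_indicator_pow_le H hZ)
          (by positivity)

end CylinderIntersection

/-- Let `H` be a Hadamard `k`-tensor of side length `N` (here `k = m+1` with `m ≥ 1`): a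
sign tensor whose contraction product along the first dimension vanishes whenever all pairs
of indices differ. Then `μ^∞(H) ≥ (N/(k−1))^{1/2^{k−1}}`. -/
theorem stmt11 (m N : ℕ) (hm : 1 ≤ m) (hN : 0 < N)
    (H : (Fin (m + 1) → Fin N) → ℝ) (hsign : ∀ v, H v = 1 ∨ H v = -1)
    (hHad : ∀ y y' : Fin m → Fin N, (∀ i, y i ≠ y' i) →
      ∑ x₀ : Fin N, ∏ ε : Fin m → Bool,
        H (Fin.cons x₀ (fun i => if ε i then y' i else y i)) = 0) :
    ((N : ℝ) / m) ^ ((1 : ℝ) / 2 ^ m) ≤ muInf H := by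
  have : Nontrivial (Fin (m + 1)) := Fin.nontrivial_iff_two_le.mpr (by omega)
  have : NeZero N := ⟨hN.ne'⟩
  have hN' : (0 : ℝ) < N := Nat.cast_pos.mpr hN
  have hH : ∀ v, |H v| = 1 := fun v => by rcases hsign v with h | h <;> simp [h]
  have hcontr : 𝔼 y, 𝔼 y', |contractionProduct (fun x y => H (Fin.cons x y)) y y'| ≤ m / N := by
    simpa using expect_abs_contractionProduct_le (F := fun x y => H (Fin.cons x y))
      (fun x y => (hH _).le) fun y y' h => by
        simp [contractionProduct, expect_eq_sum_div_card, hHad y y' h]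
  have hmustar : mustar H ≤ N ^ (m + 1) * ((m : ℝ) / N) ^ ((1 : ℝ) / 2 ^ m) := by
    refine (mustar_le_card_mul_rpow H).trans ?_
    rw [Fintype.card_fin]
    gcongr
  have hmustar_pos : 0 < mustar H :=
    one_pos.trans_le ((hH 0).symm.le.trans (abs_le_mustar H 0))
  calc ((N : ℝ) / m) ^ ((1 : ℝ) / 2 ^ m)
      = N ^ (m + 1) / (N ^ (m + 1) * ((m : ℝ) / N) ^ ((1 : ℝ) / 2 ^ m)) := by
        rw [div_mul_cancel_left₀ (pow_pos hN' _).ne', ← Real.inv_rpow (by positivity), inv_div]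
    _ ≤ Fintype.card (Fin (m + 1) → Fin N) / mustar H := by
        rw [Fintype.card_fun, Fintype.card_fin, Fintype.card_fin, Nat.cast_pow]
        gcongr
    _ ≤ muInf H := card_div_mustar_le_muInf fun v h => by simpa [h] using hH v
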